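/- arXiv:1708.03785 — 5 statements merged into one kernel-verified Lean document; each statement's English description precedes it below -/
import Mathlib

section
/- The set of primes in [1,n] is a maximum (n,1)-shelf: the family A = {p ∈ ℕ : p prime, p ≤ n} ∪ {1} satisfies that for every prime p, the number of elements of A divisible by p is at most 1, and A has the largest cardinality among all subsets B of {1,...,n} with this property. -/
/-!
A prime divides an element of `{1} ∪ primes` only if it is that element, so this set is an
`(n,1)`-shelf. Conversely, in an `(n,1)`-shelf `B` two elements `a, b ≠ 1` with the same least
prime factor `p` are both divisible by `p`, hence equal; so `Nat.minFac` embeds `B \ {1}` into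
the primes up to `n`, and `|B| ≤ π(n) + 1`.
-/

open Finset

def IsShelf (k : ℕ) (B : Finset ℕ) : Prop :=
  ∀ p : ℕ, p.Prime → (B.filter (fun a => p ∣ a)).card ≤ k

theorem isShelf_one_of_forall_prime_or_eq_one {A : Finset ℕ}
    (hA : ∀ a ∈ A, a.Prime ∨ a = 1) : IsShelf 1 A := by
  intro p hp
  have eq_p : ∀ a ∈ A.filter (fun a => p ∣ a), a = p := by
    intro a ha
    rw [mem_filter] at ha
    rcases hA a ha.1 with ha_prime | rfl
    · exact ((Nat.prime_dvd_prime_iff_eq hp ha_prime).mp ha.2).symm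
    · exact absurd (Nat.eq_one_of_dvd_one ha.2) hp.ne_one
  exact card_le_one.mpr fun a ha b hb => (eq_p a ha).trans (eq_p b hb).symm

theorem IsShelf.injOn_minFac {B : Finset ℕ} (hB : IsShelf 1 B) :
    Set.InjOn Nat.minFac (B.erase 1 : Set ℕ) := by
  intro a ha b hb hab
  rw [mem_coe, mem_erase] at ha hb
  have ha_mem : a ∈ B.filter (fun x => a.minFac ∣ x) :=
    mem_filter.mpr ⟨ha.2, Nat.minFac_dvd a⟩
  have hb_mem : b ∈ B.filter (fun x => a.minFac ∣ x) :=
    mem_filter.mpr ⟨hb.2, hab ▸ Nat.minFac_dvd b⟩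
  exact card_le_one.mp (hB _ (Nat.minFac_prime ha.1)) a ha_mem b hb_mem

theorem IsShelf.card_le_card_primes_add_one {n : ℕ} {B : Finset ℕ} (hB : IsShelf 1 B)
    (hBn : B ⊆ Icc 1 n) : B.card ≤ ((Icc 1 n).filter Nat.Prime).card + 1 := by
  have maps_to : ∀ b ∈ B.erase 1, b.minFac ∈ (Icc 1 n).filter Nat.Prime := by
    intro b hb
    rw [mem_erase] at hb
    have hb_range := mem_Icc.mp (hBn hb.2)
    have hp := Nat.minFac_prime hb.1
    exact mem_filter.mpr
      ⟨mem_Icc.mpr ⟨hp.one_lt.le, (Nat.minFac_le hb_range.1).trans hb_range.2⟩, hp⟩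
  calc B.card ≤ (B.erase 1).card + 1 := by
        have := pred_card_le_card_erase (s := B) (a := 1); omega
    _ ≤ ((Icc 1 n).filter Nat.Prime).card + 1 :=
      Nat.add_le_add_right (card_le_card_of_injOn _ maps_to hB.injOn_minFac) 1

theorem card_filter_prime_union_one (s : Finset ℕ) :
    (s.filter Nat.Prime ∪ {1}).card = (s.filter Nat.Prime).card + 1 :=
  card_union_of_disjoint <| disjoint_singleton_right.mpr fun h =>
    Nat.not_prime_one (mem_filter.mp h).2

/-- The set of primes in `[1,n]` together with `1` is a maximum `(n,1)`-shelf. -/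
theorem primes_maximum_shelf_one (n : ℕ) (hn : 1 ≤ n) :
    let A : Finset ℕ := ((Finset.Icc 1 n).filter (fun p => p.Prime)) ∪ {1}
    A ⊆ Finset.Icc 1 n ∧
    (∀ p : ℕ, p.Prime → (A.filter (fun a => p ∣ a)).card ≤ 1) ∧
    (∀ B : Finset ℕ, B ⊆ Finset.Icc 1 n →
      (∀ p : ℕ, p.Prime → (B.filter (fun a => p ∣ a)).card ≤ 1) →
      B.card ≤ A.card) := by
  intro A
  have hA_sub : A ⊆ Icc 1 n :=
    union_subset (filter_subset _ _) (singleton_subset_iff.mpr (mem_Icc.mpr ⟨le_rfl, hn⟩))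
  have hA_shelf : IsShelf 1 A := isShelf_one_of_forall_prime_or_eq_one fun a ha => by
    rcases mem_union.mp ha with ha | ha
    · exact Or.inl (mem_filter.mp ha).2
    · exact Or.inr (mem_singleton.mp ha)
  refine ⟨hA_sub, hA_shelf, fun B hBn hB => ?_⟩
  calc B.card ≤ ((Icc 1 n).filter Nat.Prime).card + 1 :=
        IsShelf.card_le_card_primes_add_one hB hBn
    _ = A.card := (card_filter_prime_union_one _).symm
end

section
/- Any proper superset of S = {1} ∪ {p ∈ ℙ : p ≤ n} ∪ {p² : p ∈ ℙ, p² ≤ n} contained in {1,...,n} fails to be an (n,2)-shelf: if B ⊆ {1,...,n} strictly contains S, then there is a prime p with o_p(B) ≥ 3. -/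
/-!
An element `b ∈ B` outside `S` is neither `1`, a prime, nor a prime square, so its least prime
factor `p` satisfies `p² < b ≤ n`. Then `p` and `p²` lie in `S ⊆ B`, and `p < p² < b` are three
multiples of `p` in `B`.
-/

open scoped Classical

open Finset

noncomputable def onePrimesPrimeSquares (n : ℕ) : Finset ℕ :=
  {1} ∪ ((Icc 1 n).filter (fun p => p.Prime)) ∪
    ((Icc 1 n).filter (fun m => ∃ p : ℕ, p.Prime ∧ m = p ^ 2))

lemma Nat.minFac_sq_lt {b : ℕ} (hb : 0 < b) (hnp : ¬ b.Prime) (hsq : b ≠ b.minFac ^ 2) :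
    b.minFac ^ 2 < b :=
  (Nat.minFac_sq_le_self hb hnp).lt_of_ne hsq.symm

namespace onePrimesPrimeSquares

lemma prime_mem {n p : ℕ} (hp : p.Prime) (hpn : p ^ 2 ≤ n) : p ∈ onePrimesPrimeSquares n := by
  have : p ≤ p ^ 2 := Nat.le_self_pow two_ne_zero p
  simp only [onePrimesPrimeSquares, mem_union, mem_filter, mem_Icc]
  exact .inl (.inr ⟨⟨hp.one_lt.le, by omega⟩, hp⟩)

lemma sq_mem {n p : ℕ} (hp : p.Prime) (hpn : p ^ 2 ≤ n) : p ^ 2 ∈ onePrimesPrimeSquares n := by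
  simp only [onePrimesPrimeSquares, mem_union, mem_filter, mem_Icc]
  exact .inr ⟨⟨Nat.one_le_pow _ _ hp.pos, hpn⟩, p, hp, rfl⟩

lemma minFac_prime_and_sq_lt_of_notMem {n b : ℕ} (hb : b ∈ Icc 1 n)
    (hbS : b ∉ onePrimesPrimeSquares n) : b.minFac.Prime ∧ b.minFac ^ 2 < b := by
  simp only [onePrimesPrimeSquares, mem_union, mem_filter, mem_singleton, hb, true_and,
    not_or, not_exists, not_and] at hbS
  obtain ⟨⟨hb1, hbp⟩, hbsq⟩ := hbS
  have hp : b.minFac.Prime := Nat.minFac_prime hb1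
  exact ⟨hp, Nat.minFac_sq_lt (mem_Icc.mp hb).1 hbp (hbsq _ hp)⟩

end onePrimesPrimeSquares

lemma three_le_card_filter_dvd {B : Finset ℕ} {p b : ℕ} (hp : 1 < p) (hpB : p ∈ B)
    (hp2B : p ^ 2 ∈ B) (hbB : b ∈ B) (hpb : p ∣ b) (hp2b : p ^ 2 < b) :
    3 ≤ (B.filter (fun a => p ∣ a)).card := by
  have hpp2 : p < p ^ 2 := lt_self_pow₀ hp one_lt_two
  have hsub : ({p, p ^ 2, b} : Finset ℕ) ⊆ B.filter (fun a => p ∣ a) := by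
    simp only [insert_subset_iff, singleton_subset_iff, mem_filter]
    exact ⟨⟨hpB, dvd_rfl⟩, ⟨hp2B, dvd_pow_self p two_ne_zero⟩, hbB, hpb⟩
  have hcard : ({p, p ^ 2, b} : Finset ℕ).card = 3 := by
    rw [card_insert_of_notMem, card_pair] <;> simp <;> omega
  exact hcard ▸ card_le_card hsub

/-- Any proper superset of `{1} ∪ {p prime : p ≤ n} ∪ {p² : p prime, p² ≤ n}`
inside `{1,…,n}` fails to be an `(n,2)`-shelf. -/
theorem proper_superset_not_shelf_two (n : ℕ) (B : Finset ℕ)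
    (hB : B ⊆ Finset.Icc 1 n)
    (hsub : ({1} ∪ ((Finset.Icc 1 n).filter (fun p => p.Prime)) ∪
      ((Finset.Icc 1 n).filter (fun m => ∃ p : ℕ, p.Prime ∧ m = p ^ 2))) ⊂ B) :
    ∃ p : ℕ, p.Prime ∧ 3 ≤ (B.filter (fun a => p ∣ a)).card := by
  change onePrimesPrimeSquares n ⊂ B at hsub
  obtain ⟨b, hbB, hbS⟩ := exists_of_ssubset hsub
  have hb := hB hbB
  obtain ⟨hp, hp2b⟩ := onePrimesPrimeSquares.minFac_prime_and_sq_lt_of_notMem hb hbS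
  have hp2n : b.minFac ^ 2 ≤ n := hp2b.le.trans (mem_Icc.mp hb).2
  exact ⟨b.minFac, hp, three_le_card_filter_dvd hp.one_lt
    (hsub.subset (onePrimesPrimeSquares.prime_mem hp hp2n))
    (hsub.subset (onePrimesPrimeSquares.sq_mem hp hp2n)) hbB (Nat.minFac_dvd b) hp2b⟩
end

section
/- If S ⊆ A is a set of multiples of the prime p with |S| = e and all powers p^j ∈ A with 1 ≤ j ≤ e belong to S, and if every element of {p, p¹, ..., p^e} is at most n, then the set A' := (A \ S) ∪ {p, p², ..., p^e} satisfies o_q(A') ≤ o_q(A) for all primes q ≠ p and o_p(A') ≤ max(o_p(A), e). In particular, if A is an (n,k)-shelf and e ≤ k, then A' is an (n,k)-shelf. -/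
/-! Swapping the multiples `S` of `p` for the `e = |S|` powers `p, …, p^e` can only destroy
elements divisible by a prime `q ≠ p`, since no power of `p` is a multiple of `q`; and the
number of multiples of `p` cannot grow, since at most `|S|` of them come in for the `|S|`
that go out. Hence `o_p(A') ≤ o_p(A)`, which is stronger than the bound by `max (o_p A) e`. -/

open Finset

namespace Finset

variable {α : Type*} [DecidableEq α] (P : α → Prop) [DecidablePred P] {A S T : Finset α}

theorem card_filter_sdiff_union_le_of_forall_not (hT : ∀ t ∈ T, ¬ P t) :
    #((A \ S ∪ T).filter P) ≤ #(A.filter P) := by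
  rw [filter_union, filter_false_of_mem hT, union_empty]
  exact card_le_card (filter_subset_filter P sdiff_subset)

theorem card_filter_sdiff_union_le (hSA : S ⊆ A) (hSP : ∀ s ∈ S, P s) (hTS : #T ≤ #S) :
    #((A \ S ∪ T).filter P) ≤ #(A.filter P) := by
  have hsplit : #((A \ S).filter P) + #S = #(A.filter P) := by
    have hfilter : (A \ S).filter P = A.filter P \ S := by
      ext; simp only [mem_filter, mem_sdiff]; tauto
    rw [hfilter]
    exact card_sdiff_add_card_eq_card fun s hs => mem_filter.mpr ⟨hSA hs, hSP s hs⟩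
  calc #((A \ S ∪ T).filter P)
      ≤ #((A \ S).filter P) + #(T.filter P) := by rw [filter_union]; exact card_union_le _ _
    _ ≤ #((A \ S).filter P) + #S :=
        Nat.add_le_add_left ((card_filter_le T P).trans hTS) _
    _ = #(A.filter P) := hsplit

end Finset

theorem Nat.Prime.not_dvd_prime_pow {p q : ℕ} (hq : q.Prime) (hp : p.Prime) (hqp : q ≠ p)
    (j : ℕ) : ¬ q ∣ p ^ j :=
  fun h => hqp ((Nat.prime_dvd_prime_iff_eq hq hp).mp (hq.dvd_of_dvd_pow h))

theorem card_image_pow_Icc_le (p e : ℕ) : #((Icc 1 e).image (p ^ ·)) ≤ e :=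
  card_image_le.trans (by simp)

theorem image_pow_Icc_subset_Icc {p e n : ℕ} (hp : p ≠ 0)
    (hle : ∀ j : ℕ, 1 ≤ j → j ≤ e → p ^ j ≤ n) :
    (Icc 1 e).image (p ^ ·) ⊆ Icc 1 n := by
  intro x hx
  obtain ⟨j, hj, rfl⟩ := mem_image.mp hx
  rw [mem_Icc] at hj ⊢
  exact ⟨Nat.one_le_pow _ _ (Nat.pos_of_ne_zero hp), hle j hj.1 hj.2⟩

theorem shifting_step_shelf_general (n k e : ℕ) (p : ℕ) (hp : p.Prime)
    (A S : Finset ℕ) (hA : A ⊆ Finset.Icc 1 n)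
    (hSA : S ⊆ A) (hSmul : ∀ s ∈ S, p ∣ s) (hScard : S.card = e)
    (hle : ∀ j : ℕ, 1 ≤ j → j ≤ e → p ^ j ≤ n) :
    let A' : Finset ℕ := (A \ S) ∪ (Finset.Icc 1 e).image (fun j => p ^ j)
    (∀ q : ℕ, q.Prime → q ≠ p →
      (A'.filter (fun a => q ∣ a)).card ≤ (A.filter (fun a => q ∣ a)).card) ∧
    (A'.filter (fun a => p ∣ a)).card ≤ max (A.filter (fun a => p ∣ a)).card e ∧
    ((∀ q : ℕ, q.Prime → (A.filter (fun a => q ∣ a)).card ≤ k) → e ≤ k →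
      A' ⊆ Finset.Icc 1 n ∧
      ∀ q : ℕ, q.Prime → (A'.filter (fun a => q ∣ a)).card ≤ k) := by
  intro A'
  have hother : ∀ q : ℕ, q.Prime → q ≠ p → #(A'.filter (q ∣ ·)) ≤ #(A.filter (q ∣ ·)) := by
    refine fun q hq hqp => card_filter_sdiff_union_le_of_forall_not _ fun t ht => ?_
    obtain ⟨j, -, rfl⟩ := mem_image.mp ht
    exact hq.not_dvd_prime_pow hp hqp j
  have hself : #(A'.filter (p ∣ ·)) ≤ #(A.filter (p ∣ ·)) :=
    card_filter_sdiff_union_le _ hSA hSmul (hScard ▸ card_image_pow_Icc_le p e)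
  refine ⟨hother, hself.trans (le_max_left _ _), fun hshelf _ => ⟨?_, fun q hq => ?_⟩⟩
  · exact union_subset (sdiff_subset.trans hA) (image_pow_Icc_subset_Icc hp.ne_zero hle)
  · rcases eq_or_ne q p with rfl | hqp
    · exact hself.trans (hshelf q hq)
    · exact (hother q hq hqp).trans (hshelf q hq)

/-- The substitution step of the shifting operation does not increase `o_q` for
primes `q ≠ p`, bounds `o_p` by `max (o_p A) e`, and in particular maps
`(n,k)`-shelves to `(n,k)`-shelves when `e ≤ k`. -/
theorem shifting_step_shelf (n k e : ℕ) (p : ℕ) (hp : p.Prime)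
    (A S : Finset ℕ) (hA : A ⊆ Finset.Icc 1 n)
    (hSA : S ⊆ A) (hSmul : ∀ s ∈ S, p ∣ s) (hScard : S.card = e)
    (hpow : ∀ j : ℕ, 1 ≤ j → j ≤ e → p ^ j ∈ A → p ^ j ∈ S)
    (hle : ∀ j : ℕ, 1 ≤ j → j ≤ e → p ^ j ≤ n) :
    let A' : Finset ℕ := (A \ S) ∪ (Finset.Icc 1 e).image (fun j => p ^ j)
    (∀ q : ℕ, q.Prime → q ≠ p →
      (A'.filter (fun a => q ∣ a)).card ≤ (A.filter (fun a => q ∣ a)).card) ∧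
    (A'.filter (fun a => p ∣ a)).card ≤ max (A.filter (fun a => p ∣ a)).card e ∧
    ((∀ q : ℕ, q.Prime → (A.filter (fun a => q ∣ a)).card ≤ k) → e ≤ k →
      A' ⊆ Finset.Icc 1 n ∧
      ∀ q : ℕ, q.Prime → (A'.filter (fun a => q ∣ a)).card ≤ k) :=
  shifting_step_shelf_general n k e p hp A S hA hSA hSmul hScard hle
end

section
/- Berge's theorem: A matching M in a simple graph G is a maximum matching if and only if G contains no M-augmenting path. -/
variable {V : Type*} [Fintype V] [DecidableEq V]

/-- `M` is a matching of the simple graph `G`: a set of edges of `G` that are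
pairwise vertex-disjoint. -/
def IsMatchingEdges (G : SimpleGraph V) (M : Finset (Sym2 V)) : Prop :=
  ↑M ⊆ G.edgeSet ∧ ∀ e ∈ M, ∀ f ∈ M, e ≠ f → ∀ v : V, v ∈ e → v ∉ f

/-- A vertex is saturated (matched) by `M` if it lies in some edge of `M`. -/
def Saturated (M : Finset (Sym2 V)) (v : V) : Prop := ∃ e ∈ M, v ∈ e

/-- A walk `w` from `u` to `v` is `M`-augmenting: it is a path, both endpoints
are unmatched, and its edges alternate, starting (and hence ending) with an
edge not in `M`. -/
def IsAugmentingPath (G : SimpleGraph V) (M : Finset (Sym2 V)) {u v : V}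
    (w : G.Walk u v) : Prop :=
  w.IsPath ∧ ¬ Saturated M u ∧ ¬ Saturated M v ∧ 0 < w.length ∧
  ∀ (i : ℕ) (h : i < w.edges.length), (w.edges[i] ∈ M ↔ i % 2 = 1)

/-!
Switching a matching `M` along a path `w` (replacing `M` by `M ∆ E(w)`) gives again a matching
provided every inner vertex of `w`, and every endpoint covered by `M`, is covered by an `M`-edge
of `w`. Along an augmenting path this gains an edge.

Conversely, if `#M < #M'`, some vertex `u` is covered by `M'` but not by `M`. Grow a path from
`u` whose edges lie alternately in `M'` and `M` for as long as possible. If it stops after an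
`M'`-edge, its end is not covered by `M` and the path is `M`-augmenting. Otherwise its end is not
covered by `M'`, and switching `M'` along it gives a matching as large as `M'` but closer to `M`,
so induction on `#(M ∆ M')` applies.
-/

open Finset SimpleGraph Walk
open scoped symmDiff

section Counting

variable {α : Type*} [DecidableEq α]

lemma Finset.card_symmDiff_add_two_mul_card_inter (s t : Finset α) :
    #(s ∆ t) + 2 * #(s ∩ t) = #s + #t := by
  rw [symmDiff_def, sup_eq_union, card_union_of_disjoint disjoint_sdiff_sdiff]
  have hs := card_sdiff_add_card_inter s t
  have ht := card_sdiff_add_card_inter t s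
  rw [inter_comm] at ht
  omega

lemma Finset.card_symmDiff_symmDiff_lt {s t r : Finset α} (hr : r ⊆ s ∆ t) (hne : r.Nonempty) :
    #(s ∆ (t ∆ r)) < #(s ∆ t) := by
  rw [← symmDiff_assoc, symmDiff_of_ge hr]
  exact card_lt_card (sdiff_ssubset hr hne)

lemma Nat.card_filter_range_mod_two (n : ℕ) {p : ℕ} (hp : p < 2) :
    #{i ∈ range n | i % 2 = p} = (n + 1 - p) / 2 := by
  induction n with
  | zero => simp only [range_zero, filter_empty, card_empty]; omega
  | succ n ih =>
    rw [range_add_one, filter_insert]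
    split_ifs with h
    · rw [card_insert_of_notMem (by simp), ih]; omega
    · rw [ih]; omega

end Counting

namespace SimpleGraph.Walk

variable {V : Type*} {G : SimpleGraph V} {u v : V}

lemma IsPath.eq_or_eq_succ_of_getVert_mem {w : G.Walk u v} (hw : w.IsPath) {i t : ℕ}
    (hi : i < w.edges.length) (ht : t ≤ w.length) (h : w.getVert t ∈ w.edges[i]) :
    t = i ∨ t = i + 1 := by
  have hi' : i < w.length := by simpa using hi
  rw [getElem_edges, Sym2.mem_iff] at h
  exact h.imp (hw.getVert_injOn ht hi'.le) (hw.getVert_injOn ht hi')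

end SimpleGraph.Walk

section Matchings

variable {V : Type*} {G : SimpleGraph V} {M M' N N' : Finset (Sym2 V)} {u v x y : V}
  {e f : Sym2 V}

def EdgesAlternate (M : Finset (Sym2 V)) (p : ℕ) (w : G.Walk u v) : Prop :=
  ∀ (i : ℕ) (h : i < w.edges.length), w.edges[i] ∈ M ↔ i % 2 = p

def MatchedAlong (M : Finset (Sym2 V)) (w : G.Walk u v) (x : V) : Prop :=
  ∃ e ∈ w.edges, e ∈ M ∧ x ∈ e

lemma MatchedAlong.saturated {w : G.Walk u v} (h : MatchedAlong M w x) : Saturated M x :=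
  let ⟨e, _, heM, hxe⟩ := h
  ⟨e, heM, hxe⟩

lemma IsMatchingEdges.eq_of_mem (hM : IsMatchingEdges G M) (he : e ∈ M) (hf : f ∈ M)
    (hxe : x ∈ e) (hxf : x ∈ f) : e = f := by
  by_contra hef
  exact hM.2 e he f hf hef x hxe hxf

lemma MatchedAlong.mem_edges (hM : IsMatchingEdges G M) {w : G.Walk u v}
    (h : MatchedAlong M w x) (hf : f ∈ M) (hxf : x ∈ f) : f ∈ w.edges := by
  obtain ⟨e, hew, heM, hxe⟩ := h
  rwa [hM.eq_of_mem hf heM hxf hxe]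

lemma matchedAlong_getVert_of_getElem_mem {w : G.Walk u v} {i : ℕ} (hi : i < w.edges.length)
    (h : w.edges[i] ∈ M) :
    MatchedAlong M w (w.getVert i) ∧ MatchedAlong M w (w.getVert (i + 1)) := by
  have hmem := List.getElem_mem hi
  rw [getElem_edges] at h hmem
  exact ⟨⟨_, hmem, h, Sym2.mem_mk_left _ _⟩, ⟨_, hmem, h, Sym2.mem_mk_right _ _⟩⟩

lemma SimpleGraph.Walk.IsPath.eq_of_getElem_edges_notMem {w : G.Walk u v} (hw : w.IsPath)
    (hint : ∀ t, 0 < t → t < w.length → MatchedAlong M w (w.getVert t)) {i j : ℕ}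
    (hi : i < w.edges.length) (hj : j < w.edges.length) (hiM : w.edges[i] ∉ M)
    (hjM : w.edges[j] ∉ M) (hxi : x ∈ w.edges[i]) (hxj : x ∈ w.edges[j]) : i = j := by
  obtain ⟨t, rfl, ht⟩ :=
    mem_support_iff_exists_getVert.1 (mem_support_of_mem_edges (List.getElem_mem hi) hxi)
  have hti := hw.eq_or_eq_succ_of_getVert_mem hi ht hxi
  have htj := hw.eq_or_eq_succ_of_getVert_mem hj ht hxj
  by_contra hij
  have hlen : w.edges.length = w.length := length_edges w
  obtain ⟨g, hgw, hgM, htg⟩ := hint t (by omega) (by omega)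
  obtain ⟨k, hk, rfl⟩ := List.mem_iff_getElem.1 hgw
  have htk := hw.eq_or_eq_succ_of_getVert_mem hk ht htg
  obtain rfl | rfl : k = i ∨ k = j := by omega
  exacts [hiM hgM, hjM hgM]

namespace EdgesAlternate

variable {p : ℕ} {w : G.Walk u v}

lemma matchedAlong_getVert (h : EdgesAlternate M p w) (hp : p < 2) {t : ℕ} (ht0 : 0 < t)
    (ht : t < w.length) : MatchedAlong M w (w.getVert t) := by
  by_cases htp : t % 2 = p
  · exact (matchedAlong_getVert_of_getElem_mem (by simpa using ht) ((h t _).2 htp)).1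
  · have hi : t - 1 < w.edges.length := by rw [length_edges]; omega
    have := (matchedAlong_getVert_of_getElem_mem hi ((h (t - 1) hi).2 (by omega))).2
    rwa [Nat.sub_add_cancel ht0] at this

lemma matchedAlong_start (h : EdgesAlternate M 0 w) (hw : 0 < w.length) :
    MatchedAlong M w u := by
  have hi : 0 < w.edges.length := by simpa using hw
  simpa using (matchedAlong_getVert_of_getElem_mem hi ((h 0 hi).2 rfl)).1

lemma matchedAlong_end (h : EdgesAlternate M p w) (hw : 0 < w.length)
    (hp : (w.length + 1) % 2 = p) : MatchedAlong M w v := by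
  have hi : w.length - 1 < w.edges.length := by rw [length_edges]; omega
  have := (matchedAlong_getVert_of_getElem_mem hi ((h _ hi).2 (by omega))).2
  rwa [Nat.sub_add_cancel hw, getVert_length] at this

lemma matchedAlong_getVert_of_lt (h : EdgesAlternate M p w) (hp : p < 2)
    (hu : p = 0 ∨ ¬ Saturated M u) {t : ℕ} (ht : t < w.length)
    (hs : Saturated M (w.getVert t)) :
    MatchedAlong M w (w.getVert t) := by
  rcases Nat.eq_zero_or_pos t with rfl | ht0
  · rw [getVert_zero] at hs ⊢
    rcases hu with rfl | hu
    · exact h.matchedAlong_start ht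
    · exact absurd hs hu
  · exact h.matchedAlong_getVert hp ht0 ht

lemma concat (hw : EdgesAlternate M p w) (hvy : G.Adj v y)
    (he : s(v, y) ∈ M ↔ w.length % 2 = p) : EdgesAlternate M p (w.concat hvy) := by
  intro i hi
  simp only [edges_concat, List.concat_eq_append, List.length_append, List.length_singleton,
    length_edges] at hi ⊢
  rw [List.getElem_append]
  split_ifs with hlt
  · exact hw i hlt
  · simp only [List.getElem_singleton]
    rwa [show i = w.length by simp at hlt; omega]

end EdgesAlternate

end Matchings

section Switching

variable {V : Type*} [DecidableEq V] {G : SimpleGraph V} {M : Finset (Sym2 V)} {u v x : V}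
  {w : G.Walk u v}

lemma EdgesAlternate.card_toFinset_edges_inter {p : ℕ} (hw : w.IsTrail)
    (h : EdgesAlternate M p w) :
    #(w.edges.toFinset ∩ M) = #{i ∈ range w.length | i % 2 = p} := by
  symm
  refine card_bij (fun i hi => w.edges[i]'(by simpa using (mem_filter.1 hi).1)) ?_ ?_ ?_
  · intro i hi
    rw [mem_filter, mem_range] at hi
    exact mem_inter.2 ⟨List.mem_toFinset.2 (List.getElem_mem _), (h i _).2 hi.2⟩
  · intro i _ j _ hij
    exact hw.edges_nodup.getElem_inj_iff.1 hij
  · intro e he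
    rw [mem_inter, List.mem_toFinset] at he
    obtain ⟨i, hi, rfl⟩ := List.mem_iff_getElem.1 he.1
    exact ⟨i, mem_filter.2 ⟨mem_range.2 (by simpa using hi), (h i hi).1 he.2⟩, rfl⟩

lemma EdgesAlternate.card_symmDiff_toFinset_edges {p : ℕ} (hw : w.IsTrail)
    (h : EdgesAlternate M p w) (hp : p < 2) :
    #(M ∆ w.edges.toFinset) + 2 * ((w.length + 1 - p) / 2) = #M + w.length := by
  have hE : #w.edges.toFinset = w.length := by
    rw [List.toFinset_card_of_nodup hw.edges_nodup, length_edges]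
  rw [← Nat.card_filter_range_mod_two _ hp, ← h.card_toFinset_edges_inter hw, inter_comm,
    ← hE]
  exact card_symmDiff_add_two_mul_card_inter _ _

theorem IsMatchingEdges.symmDiff_toFinset_edges (hM : IsMatchingEdges G M) (hw : w.IsPath)
    (hint : ∀ t, 0 < t → t < w.length → MatchedAlong M w (w.getVert t))
    (hu : Saturated M u → MatchedAlong M w u) (hv : Saturated M v → MatchedAlong M w v) :
    IsMatchingEdges G (M ∆ w.edges.toFinset) := by
  have hsat : ∀ x ∈ w.support, Saturated M x → MatchedAlong M w x := by
    intro x hx hs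
    obtain ⟨t, rfl, ht⟩ := mem_support_iff_exists_getVert.1 hx
    rcases Nat.eq_zero_or_pos t with rfl | ht0
    · rw [getVert_zero] at hs ⊢
      exact hu hs
    rcases ht.lt_or_eq with ht | rfl
    · exact hint t ht0 ht
    · rw [getVert_length] at hs ⊢
      exact hv hs
  have hoff : ∀ e ∈ M, e ∉ w.edges → ∀ f ∈ w.edges, ∀ x ∈ e, x ∉ f :=
    fun e heM hew f hfw x hxe hxf =>
    hew ((hsat x (mem_support_of_mem_edges hfw hxf) ⟨e, heM, hxe⟩).mem_edges hM heM hxe)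
  refine ⟨fun e he => ?_, fun e he f hf hef x hxe hxf => ?_⟩
  · rcases mem_symmDiff.1 he with ⟨heM, -⟩ | ⟨hew, -⟩
    · exact hM.1 heM
    · exact w.edges_subset_edgeSet (List.mem_toFinset.1 hew)
  simp only [mem_symmDiff, List.mem_toFinset] at he hf
  rcases he with ⟨heM, hew⟩ | ⟨hew, heM⟩ <;> rcases hf with ⟨hfM, hfw⟩ | ⟨hfw, hfM⟩
  · exact hM.2 e heM f hfM hef x hxe hxf
  · exact hoff e heM hew f hfw x hxe hxf
  · exact hoff f hfM hfw e hew x hxf hxe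
  · obtain ⟨i, hi, rfl⟩ := List.mem_iff_getElem.1 hew
    obtain ⟨j, hj, rfl⟩ := List.mem_iff_getElem.1 hfw
    obtain rfl := hw.eq_of_getElem_edges_notMem hint hi hj heM hfM hxe hxf
    exact hef rfl

theorem IsAugmentingPath.exists_card_lt (hM : IsMatchingEdges G M)
    (hw : IsAugmentingPath G M w) :
    ∃ M' : Finset (Sym2 V), IsMatchingEdges G M' ∧ #M < #M' := by
  obtain ⟨hp, hu, hv, hpos, halt⟩ := hw
  have halt : EdgesAlternate M 1 w := halt
  have hodd : w.length % 2 = 1 := by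
    by_contra heven
    exact hv (halt.matchedAlong_end hpos (by omega)).saturated
  refine ⟨_, hM.symmDiff_toFinset_edges hp (fun t => halt.matchedAlong_getVert one_lt_two)
    (absurd · hu) (absurd · hv), ?_⟩
  have := halt.card_symmDiff_toFinset_edges hp.isTrail one_lt_two
  omega

end Switching

section Extension

variable {V : Type*} {G : SimpleGraph V} {M M' N N' : Finset (Sym2 V)} {u x : V}

lemma exists_adj_notMem_support (hN : IsMatchingEdges G N) {w : G.Walk u x}
    (hcov : ∀ t < w.length, Saturated N (w.getVert t) → MatchedAlong N w (w.getVert t))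
    {f : Sym2 V} (hf : f ∈ N) (hxf : x ∈ f) (hfw : f ∉ w.edges) :
    ∃ y, G.Adj x y ∧ s(x, y) = f ∧ y ∉ w.support := by
  have hadj : G.Adj x (Sym2.Mem.other hxf) := by
    rw [← SimpleGraph.mem_edgeSet, Sym2.other_spec hxf]
    exact hN.1 hf
  refine ⟨_, hadj, Sym2.other_spec hxf, fun hy => ?_⟩
  obtain ⟨t, hyt, ht⟩ := mem_support_iff_exists_getVert.1 hy
  rcases ht.lt_or_eq with ht | rfl
  · have hyf : w.getVert t ∈ f := hyt ▸ Sym2.other_mem hxf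
    exact hfw ((hcov t ht ⟨f, hf, hyf⟩).mem_edges hN hf hyf)
  · exact hadj.ne (hyt ▸ getVert_length w).symm

lemma exists_concat_edgesAlternate (hN : IsMatchingEdges G N) (hN' : IsMatchingEdges G N')
    {w : G.Walk u x} (hw : w.IsPath) {p p' : ℕ} (hwN : EdgesAlternate N p w)
    (hwN' : EdgesAlternate N' p' w) (hp : w.length % 2 = p) (hp' : (w.length + 1) % 2 = p')
    (hcov : ∀ t < w.length, Saturated N (w.getVert t) → MatchedAlong N w (w.getVert t))
    (hx' : Saturated N' x → MatchedAlong N' w x) (hx : Saturated N x) :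
    ∃ y, ∃ h : G.Adj x y, (w.concat h).IsPath ∧
      EdgesAlternate N p (w.concat h) ∧ EdgesAlternate N' p' (w.concat h) := by
  obtain ⟨f, hfN, hxf⟩ := hx
  have hfw : f ∉ w.edges := by
    intro hfw
    obtain ⟨i, hi, rfl⟩ := List.mem_iff_getElem.1 hfw
    have hxi := hw.eq_or_eq_succ_of_getVert_mem hi le_rfl (by rwa [getVert_length])
    have hpi := (hwN i hi).1 hfN
    have hlen : w.edges.length = w.length := length_edges w
    omega
  have hfN' : f ∉ N' := fun hfN' => hfw ((hx' ⟨f, hfN', hxf⟩).mem_edges hN' hfN' hxf)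
  obtain ⟨y, hxy, rfl, hy⟩ := exists_adj_notMem_support hN hcov hfN hxf hfw
  refine ⟨y, hxy, hw.concat hy hxy, hwN.concat hxy (iff_of_true hfN hp),
    hwN'.concat hxy (iff_of_false hfN' (by omega))⟩

structure IsAltPath (M M' : Finset (Sym2 V)) (w : G.Walk u x) : Prop where
  isPath : w.IsPath
  left : EdgesAlternate M 1 w
  right : EdgesAlternate M' 0 w

lemma IsAltPath.exists_concat {w : G.Walk u x} (hM : IsMatchingEdges G M)
    (hM' : IsMatchingEdges G M') (hu : ¬ Saturated M u) (hw : IsAltPath M M' w)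
    (hx : w.length % 2 = 1 ∧ Saturated M x ∨ w.length % 2 = 0 ∧ Saturated M' x) :
    ∃ y, ∃ h : G.Adj x y, IsAltPath M M' (w.concat h) := by
  have hcov := fun t => hw.left.matchedAlong_getVert_of_lt one_lt_two (Or.inr hu) (t := t)
  have hcov' := fun t => hw.right.matchedAlong_getVert_of_lt two_pos (Or.inl rfl) (t := t)
  rcases hx with ⟨hodd, hx⟩ | ⟨heven, hx⟩
  · obtain ⟨y, h, hp, h1, h0⟩ := exists_concat_edgesAlternate hM hM' hw.isPath hw.left hw.right
      hodd (by omega) hcov (fun _ => hw.right.matchedAlong_end (by omega) (by omega)) hx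
    exact ⟨y, h, hp, h1, h0⟩
  · have hx' : Saturated M x → MatchedAlong M w x := by
      intro hsx
      rcases Nat.eq_zero_or_pos w.length with h0 | hpos
      · obtain rfl := eq_of_length_eq_zero h0
        exact absurd hsx hu
      · exact hw.left.matchedAlong_end hpos (by omega)
    obtain ⟨y, h, hp, h0, h1⟩ := exists_concat_edgesAlternate hM' hM hw.isPath hw.right hw.left
      heven (by omega) hcov' hx' hx
    exact ⟨y, h, hp, h1, h0⟩

lemma exists_maximal_isAltPath [Fintype V] (hM : IsMatchingEdges G M)
    (hM' : IsMatchingEdges G M') (hu : ¬ Saturated M u) :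
    ∃ x, ∃ w : G.Walk u x, IsAltPath M M' w ∧
      ¬ (w.length % 2 = 1 ∧ Saturated M x ∨ w.length % 2 = 0 ∧ Saturated M' x) := by
  by_contra! hext
  have hlong : ∀ n, ∃ x, ∃ w : G.Walk u x, IsAltPath M M' w ∧ w.length = n := by
    intro n
    induction n with
    | zero =>
      exact ⟨u, nil, ⟨.nil, fun i hi => by simp at hi, fun i hi => by simp at hi⟩, rfl⟩
    | succ n ih =>
      obtain ⟨x, w, hw, rfl⟩ := ih
      obtain ⟨y, h, hw'⟩ := hw.exists_concat hM hM' hu (hext x w hw)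
      exact ⟨y, _, hw', length_concat w h⟩
  obtain ⟨x, w, hw, hlen⟩ := hlong (Fintype.card V)
  exact hw.isPath.length_lt.ne hlen

end Extension

section Augmenting

variable {V : Type*} [DecidableEq V] {G : SimpleGraph V} {M M' : Finset (Sym2 V)} {u x : V}

lemma IsMatchingEdges.card_biUnion_toFinset (hM : IsMatchingEdges G M) :
    #(M.biUnion Sym2.toFinset) = 2 * #M := by
  rw [card_biUnion, sum_congr rfl fun e he =>
    Sym2.card_toFinset_of_not_isDiag e (G.not_isDiag_of_mem_edgeSet (hM.1 he)), sum_const,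
    smul_eq_mul, mul_comm]
  intro e he f hf hef
  exact disjoint_left.2 fun x hxe hxf =>
    hM.2 e he f hf hef x (Sym2.mem_toFinset.1 hxe) (Sym2.mem_toFinset.1 hxf)

lemma exists_saturated_not_saturated (hM : IsMatchingEdges G M) (hM' : IsMatchingEdges G M')
    (h : #M < #M') : ∃ u, Saturated M' u ∧ ¬ Saturated M u := by
  obtain ⟨u, hu', hu⟩ := exists_mem_notMem_of_card_lt_card
    (s := M.biUnion Sym2.toFinset) (t := M'.biUnion Sym2.toFinset)
    (by rw [hM.card_biUnion_toFinset, hM'.card_biUnion_toFinset]; omega)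
  simp only [mem_biUnion, Sym2.mem_toFinset] at hu' hu
  exact ⟨u, hu', hu⟩

lemma IsAltPath.toFinset_edges_subset {w : G.Walk u x} (hw : IsAltPath M M' w) :
    w.edges.toFinset ⊆ M ∆ M' := by
  intro e he
  obtain ⟨i, hi, rfl⟩ := List.mem_iff_getElem.1 (List.mem_toFinset.1 he)
  rw [mem_symmDiff, hw.left i hi, hw.right i hi]
  omega

theorem exists_isAugmentingPath_of_card_lt [Fintype V] (hM : IsMatchingEdges G M)
    (hM' : IsMatchingEdges G M') (h : #M < #M') :
    ∃ (u v : V) (w : G.Walk u v), IsAugmentingPath G M w := by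
  induction hn : #(M ∆ M') using Nat.strong_induction_on generalizing M' with
  | _ n ih =>
  obtain ⟨u, hu', hu⟩ := exists_saturated_not_saturated hM hM' h
  obtain ⟨x, w, hw, hmax⟩ := exists_maximal_isAltPath hM hM' hu
  rcases Nat.mod_two_eq_zero_or_one w.length with heven | hodd
  · have hx' : ¬ Saturated M' x := fun hx => hmax (Or.inr ⟨heven, hx⟩)
    have hpos : 0 < w.length := Nat.pos_of_ne_zero fun h0 => by
      obtain rfl := eq_of_length_eq_zero h0
      exact hx' hu'
    have hM'' := hM'.symmDiff_toFinset_edges hw.isPath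
      (fun t => hw.right.matchedAlong_getVert two_pos) (fun _ => hw.right.matchedAlong_start hpos)
      (absurd · hx')
    have hcard := hw.right.card_symmDiff_toFinset_edges hw.isPath.isTrail two_pos
    have hlt := card_symmDiff_symmDiff_lt hw.toFinset_edges_subset
      ⟨_, List.mem_toFinset.2 (List.getElem_mem (l := w.edges) (n := 0) (by simpa using hpos))⟩
    exact ih _ (hn ▸ hlt) hM'' (by omega) rfl
  · exact ⟨u, x, w, hw.isPath, hu, fun hx => hmax (Or.inl ⟨hodd, hx⟩), by omega, hw.left⟩

end Augmenting

/-- **Berge's theorem**: a matching `M` of `G` is maximum if and only if `G`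
contains no `M`-augmenting path. -/
theorem berge_theorem (G : SimpleGraph V) (M : Finset (Sym2 V))
    (hM : IsMatchingEdges G M) :
    (∀ M' : Finset (Sym2 V), IsMatchingEdges G M' → M'.card ≤ M.card) ↔
    ¬ ∃ (u v : V) (w : G.Walk u v), IsAugmentingPath G M w := by
  constructor
  · rintro hmax ⟨u, v, w, hw⟩
    obtain ⟨M', hM', hlt⟩ := hw.exists_card_lt hM
    exact (hmax M' hM').not_gt hlt
  · intro hno M' hM'
    by_contra! hlt
    exact hno (exists_isAugmentingPath_of_card_lt hM hM' hlt)
end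

section
/- Structure of shifted maximum (n,3)-shelves: if A is an (n,3)-shelf such that A contains p, p², p³ for every prime p with p³ ≤ n, contains p, p² for every prime p with p² ≤ n < p³, contains p for every prime p ≤ n, and A has maximal cardinality, then every element a ∈ A with at least two distinct prime divisors is of the form a = p·q with primes p, q satisfying n^{1/3} < p ≤ √n and n^{1/3} < q ≤ n. -/
/-!
If a prime `r` with `r³ ≤ n` divided an element `a` that is not a power of `r`, then
`r, r², r³, a` would be four distinct elements of the shelf divisible by `r`. Hence every prime
factor of such an `a` exceeds `n^{1/3}`, so `a ≤ n` leaves room for only two prime factors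
counted with multiplicity; the smaller of the two distinct ones then satisfies `p² < pq ≤ n`.
-/

open Finset

lemma Nat.ne_prime_pow_of_two_le_card_primeFactors {a r k : ℕ} (hr : r.Prime) (hk : k ≠ 0)
    (ha : 2 ≤ a.primeFactors.card) : a ≠ r ^ k := by
  rintro rfl
  simp [Nat.primeFactors_prime_pow hk hr] at ha

lemma four_le_card_filter_prime_dvd {A : Finset ℕ} {r a : ℕ} (hr : r.Prime)
    (hpows : r ∈ A ∧ r ^ 2 ∈ A ∧ r ^ 3 ∈ A) (ha : a ∈ A) (hra : r ∣ a)
    (hcard : 2 ≤ a.primeFactors.card) : 4 ≤ (A.filter (fun x => r ∣ x)).card := by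
  have ha_notMem : a ∉ (Icc 1 3).image (r ^ ·) := by
    simp only [mem_image, mem_Icc, not_exists, not_and]
    intro k hk h
    exact Nat.ne_prime_pow_of_two_le_card_primeFactors hr (by omega) hcard h.symm
  have hsub : insert a ((Icc 1 3).image (r ^ ·)) ⊆ A.filter (fun x => r ∣ x) := by
    intro x hx
    simp only [mem_insert, mem_image, mem_Icc] at hx
    rcases hx with rfl | ⟨k, ⟨hk1, hk3⟩, rfl⟩
    · exact mem_filter.mpr ⟨ha, hra⟩
    · refine mem_filter.mpr ⟨?_, dvd_pow_self r (by omega)⟩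
      interval_cases k
      exacts [by simpa using hpows.1, hpows.2.1, hpows.2.2]
  calc 4 = (insert a ((Icc 1 3).image (r ^ ·))).card := by
        rw [card_insert_of_notMem ha_notMem,
          card_image_of_injective _ (Nat.pow_right_injective hr.two_le)]
        rfl
    _ ≤ _ := card_le_card hsub

lemma lt_pow_three_of_prime_dvd {n a r : ℕ} {A : Finset ℕ}
    (hshelf : ∀ p : ℕ, p.Prime → (A.filter (fun a => p ∣ a)).card ≤ 3)
    (hcubes : ∀ p : ℕ, p.Prime → p ^ 3 ≤ n → p ∈ A ∧ p ^ 2 ∈ A ∧ p ^ 3 ∈ A)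
    (ha : a ∈ A) (hcard : 2 ≤ a.primeFactors.card) (hr : r.Prime) (hra : r ∣ a) :
    n < r ^ 3 := by
  by_contra! hle
  have := four_le_card_filter_prime_dvd hr (hcubes r hr hle) ha hra hcard
  have := hshelf r hr
  omega

lemma eq_mul_of_lt_pow_three_of_prime_dvd {n a p q : ℕ} (ha0 : 0 < a) (han : a ≤ n)
    (hcube : ∀ r : ℕ, r.Prime → r ∣ a → n < r ^ 3) (hp : p.Prime) (hq : q.Prime)
    (hpq : p ≠ q) (hpa : p ∣ a) (hqa : q ∣ a) : a = p * q := by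
  obtain ⟨m, rfl⟩ := Nat.Coprime.mul_dvd_of_dvd_of_dvd
    ((Nat.coprime_primes hp hq).mpr hpq) hpa hqa
  have hm0 : m ≠ 0 := by rintro rfl; simp at ha0
  suffices hm1 : m = 1 by rw [hm1, mul_one]
  by_contra hm1
  set r := m.minFac
  have hr : r.Prime := Nat.minFac_prime hm1
  have hrm : r ∣ m := Nat.minFac_dvd m
  have hcube_lt : n ^ 3 < (p * q * r) ^ 3 := by
    rw [mul_pow, mul_pow, pow_three' n]
    exact Nat.mul_lt_mul'' (Nat.mul_lt_mul'' (hcube p hp hpa)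
      (hcube q hq hqa)) (hcube r hr (dvd_mul_of_dvd_right hrm _))
  have hlt : n < p * q * r := lt_of_pow_lt_pow_left₀ 3 (Nat.zero_le _) hcube_lt
  have hle : p * q * r ≤ p * q * m :=
    Nat.mul_le_mul_left _ (Nat.le_of_dvd (Nat.pos_of_ne_zero hm0) hrm)
  omega

theorem structure_shifted_maximum_shelf_three_general (n : ℕ) (A : Finset ℕ)
    (hA : A ⊆ Finset.Icc 1 n)
    (hshelf : ∀ p : ℕ, p.Prime → (A.filter (fun a => p ∣ a)).card ≤ 3)
    (hcubes : ∀ p : ℕ, p.Prime → p ^ 3 ≤ n → p ∈ A ∧ p ^ 2 ∈ A ∧ p ^ 3 ∈ A) :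
    ∀ a ∈ A, 2 ≤ a.primeFactors.card →
      ∃ p q : ℕ, p.Prime ∧ q.Prime ∧ a = p * q ∧
        n < p ^ 3 ∧ p ^ 2 ≤ n ∧ n < q ^ 3 ∧ q ≤ n := by
  intro a ha hcard
  obtain ⟨ha1, han⟩ := mem_Icc.mp (hA ha)
  have hcube : ∀ r : ℕ, r.Prime → r ∣ a → n < r ^ 3 :=
    fun r hr hra => lt_pow_three_of_prime_dvd hshelf hcubes ha hcard hr hra
  obtain ⟨p, hp, q, hq, hpq⟩ := one_lt_card.mp hcard
  wlog hlt : p < q generalizing p q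
  · exact this q hq p hp hpq.symm (hpq.lt_or_gt.resolve_left hlt)
  have hpa := Nat.dvd_of_mem_primeFactors hp
  have hqa := Nat.dvd_of_mem_primeFactors hq
  replace hp := Nat.prime_of_mem_primeFactors hp
  replace hq := Nat.prime_of_mem_primeFactors hq
  have ha_eq := eq_mul_of_lt_pow_three_of_prime_dvd ha1 han hcube hp hq hpq hpa hqa
  refine ⟨p, q, hp, hq, ha_eq, hcube p hp hpa, ?_, hcube q hq hqa, ?_⟩
  · calc p ^ 2 = p * p := sq p
      _ ≤ p * q := Nat.mul_le_mul_left p hlt.le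
      _ ≤ n := ha_eq ▸ han
  · exact (Nat.le_of_dvd ha1 hqa).trans han

/-- Structure of shifted maximum `(n,3)`-shelves: in a maximum `(n,3)`-shelf
containing all prime powers `p^i ≤ n` with `i ≤ 3`, every element with at least
two distinct prime divisors is a product `p·q` of primes with
`n^{1/3} < p ≤ √n` and `n^{1/3} < q ≤ n`. -/
theorem structure_shifted_maximum_shelf_three (n : ℕ) (A : Finset ℕ)
    (hA : A ⊆ Finset.Icc 1 n)
    (hshelf : ∀ p : ℕ, p.Prime → (A.filter (fun a => p ∣ a)).card ≤ 3)
    (hcubes : ∀ p : ℕ, p.Prime → p ^ 3 ≤ n → p ∈ A ∧ p ^ 2 ∈ A ∧ p ^ 3 ∈ A)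
    (hsquares : ∀ p : ℕ, p.Prime → p ^ 2 ≤ n → n < p ^ 3 → p ∈ A ∧ p ^ 2 ∈ A)
    (hprimes : ∀ p : ℕ, p.Prime → p ≤ n → p ∈ A)
    (hmax : ∀ B : Finset ℕ, B ⊆ Finset.Icc 1 n →
      (∀ p : ℕ, p.Prime → (B.filter (fun a => p ∣ a)).card ≤ 3) →
      B.card ≤ A.card) :
    ∀ a ∈ A, 2 ≤ a.primeFactors.card →
      ∃ p q : ℕ, p.Prime ∧ q.Prime ∧ a = p * q ∧
        n < p ^ 3 ∧ p ^ 2 ≤ n ∧ n < q ^ 3 ∧ q ≤ n :=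
  structure_shifted_maximum_shelf_three_general n A hA hshelf hcubes
end
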